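/- arXiv:1511.08403 — 6 statements merged into one kernel-verified Lean document; each statement's English description precedes it below -/
import Mathlib

section
/- If G is a minimal forbidden induced subgraph for the class Υ_k (i.e., G ∉ Υ_k but every proper induced subgraph of G is in Υ_k), then G has a dominating vertex. -/
open SimpleGraph

attribute [local instance] Classical.propDecidable

set_option linter.unnecessarySeqFocus false

/-- `G ∈ Υ_k`: every nonempty induced subgraph `H` satisfies `Δ(H) + 1 ≤ χ(H) + k`,
i.e. `Δ(H) ≤ χ(H) + k - 1`. -/
def UpsilonMem (k : ℕ) {V : Type*} [Fintype V] (G : SimpleGraph V) : Prop :=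
  ∀ s : Finset V, s.Nonempty →
    ((G.induce (s : Set V)).maxDegree + 1 : ℕ∞) ≤
      (G.induce (s : Set V)).chromaticNumber + (k : ℕ∞)

/-- `G ∈ Ω_k`: every nonempty induced subgraph `H` satisfies `Δ(H) + 1 ≤ ω(H) + k`. -/
def OmegaMem (k : ℕ) {V : Type*} [Fintype V] (G : SimpleGraph V) : Prop :=
  ∀ s : Finset V, s.Nonempty →
    (G.induce (s : Set V)).maxDegree + 1 ≤ (G.induce (s : Set V)).cliqueNum + k

/-- `G` is a minimal forbidden induced subgraph for `Υ_k`. -/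
def MinForbUpsilon (k : ℕ) {V : Type*} [Fintype V] (G : SimpleGraph V) : Prop :=
  ¬ UpsilonMem k G ∧
    ∀ s : Finset V, s ≠ Finset.univ → UpsilonMem k (G.induce (s : Set V))

/-- `G` is a minimal forbidden induced subgraph for `Ω_k`. -/
def MinForbOmega (k : ℕ) {V : Type*} [Fintype V] (G : SimpleGraph V) : Prop :=
  ¬ OmegaMem k G ∧
    ∀ s : Finset V, s ≠ Finset.univ → OmegaMem k (G.induce (s : Set V))

/-- `v` is a dominating vertex of `G`. -/
def IsDominatingVertex {V : Type*} (G : SimpleGraph V) (v : V) : Prop :=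
  ∀ w, w ≠ v → G.Adj v w

/-- In every optimal proper coloring of `G`, every used color class has at least 2 vertices. -/
def AllColorClassesBig {V : Type*} [Fintype V] (G : SimpleGraph V) : Prop :=
  ∀ (n : ℕ) (C : G.Coloring (Fin n)), (n : ℕ∞) = G.chromaticNumber →
    ∀ c : Fin n, (∃ u, C u = c) → 2 ≤ Fintype.card {u // C u = c}

/-- `G` is a perfect graph: clique number equals chromatic number for every induced subgraph. -/
def IsPerfect {V : Type*} [Fintype V] (G : SimpleGraph V) : Prop :=
  ∀ s : Finset V,
    (((G.induce (s : Set V)).cliqueNum : ℕ∞)) = (G.induce (s : Set V)).chromaticNumber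

/-- Add a dominating vertex to `G`. -/
def cone {V : Type*} (G : SimpleGraph V) : SimpleGraph (Option V) where
  Adj a b := match a, b with
    | some a, some b => G.Adj a b
    | some _, none => True
    | none, some _ => True
    | none, none => False
  symm := ⟨by rintro (_|a) (_|b) h <;> simp_all <;> exact h.symm⟩
  loopless := ⟨by rintro (_|a) h <;> simp_all⟩

/-- The claw `K_{1,3}`. -/
def claw : SimpleGraph (Fin 1 ⊕ Fin 3) := completeBipartiteGraph (Fin 1) (Fin 3)

/-- The gem: `P₄` plus a dominating vertex. -/
def gem : SimpleGraph (Option (Fin 4)) := cone (pathGraph 4)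

/-- The wheel `W₄`: `C₄` plus a dominating vertex. -/
def wheel4 : SimpleGraph (Option (Fin 4)) := cone (cycleGraph 4)

/-- The butterfly: two triangles sharing exactly one vertex. -/
def butterfly : SimpleGraph (Fin 5) :=
  SimpleGraph.fromRel (fun a b =>
    (a, b) ∈ [((0:Fin 5), (1:Fin 5)), (0,2), (1,2), (0,3), (0,4), (3,4)])

/-- `G` is a disjoint union of complete graphs. -/
def IsUnionOfCliques {V : Type*} (G : SimpleGraph V) : Prop :=
  ∀ a b c, G.Adj a b → G.Adj b c → a ≠ c → G.Adj a c

/-- `G` is neighborhood perfect: the neighborhood of every vertex induces a perfect graph. -/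
def NbhdPerfect {V : Type*} [Fintype V] (G : SimpleGraph V) : Prop :=
  ∀ v : V, IsPerfect (G.induce (G.neighborSet v))

/-! If `G` is minimal forbidden for `Υ_k`, then `G` itself is the only induced subgraph violating
`Δ + 1 ≤ χ + k`. Let `v` be a vertex of maximum degree. Its closed neighbourhood induces a
subgraph with the same maximum degree and no larger chromatic number, so it violates the
inequality as well; hence it is all of `G`, i.e. `v` is dominating. -/

namespace SimpleGraph

variable {V : Type*} [Fintype V] {G : SimpleGraph V} {k : ℕ}

/-- `induceUnivIso` for `↑Finset.univ`, which is not syntactically `Set.univ`. -/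
def induceFinsetUnivIso (G : SimpleGraph V) :
    G.induce ((Finset.univ : Finset V) : Set V) ≃g G where
  toEquiv := Equiv.subtypeUnivEquiv Finset.mem_univ
  map_rel_iff' := Iff.rfl

lemma maxDegree_induce_univ :
    (G.induce ((Finset.univ : Finset V) : Set V)).maxDegree = G.maxDegree :=
  G.induceFinsetUnivIso.maxDegree_eq

lemma chromaticNumber_induce_univ :
    (G.induce ((Finset.univ : Finset V) : Set V)).chromaticNumber = G.chromaticNumber :=
  chromaticNumber_congr G.induceFinsetUnivIso

lemma degree_le_maxDegree_induce {s : Set V} [Fintype s] {v : V} (hv : v ∈ s)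
    (hs : G.neighborSet v ⊆ s) :
    G.degree v ≤ (G.induce s).maxDegree := by
  rw [← degree_induce_of_neighborSet_subset (v := ⟨v, hv⟩) hs]
  convert degree_le_maxDegree _ _

lemma UpsilonMem.maxDegree_add_one_le [Nonempty V] (h : UpsilonMem k G) :
    (G.maxDegree + 1 : ℕ∞) ≤ G.chromaticNumber + k := by
  simpa only [maxDegree_induce_univ, chromaticNumber_induce_univ] using
    h Finset.univ Finset.univ_nonempty

lemma MinForbUpsilon.nonempty (h : MinForbUpsilon k G) : Nonempty V :=
  not_isEmpty_iff.mp fun _ ↦ h.1 fun s hs ↦ (hs.ne_empty s.eq_empty_of_isEmpty).elim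

lemma MinForbUpsilon.chromaticNumber_add_lt (h : MinForbUpsilon k G) :
    G.chromaticNumber + k < G.maxDegree + 1 := by
  obtain ⟨s, hs, hlt⟩ : ∃ s : Finset V, s.Nonempty ∧ (G.induce (s : Set V)).chromaticNumber + k <
      (G.induce (s : Set V)).maxDegree + 1 := by
    simpa only [UpsilonMem, not_forall, not_le, exists_prop] using h.1
  obtain rfl : s = Finset.univ := by
    by_contra hne
    have : Nonempty (s : Set V) := hs.to_subtype
    exact hlt.not_ge (h.2 s hne).maxDegree_add_one_le
  rwa [maxDegree_induce_univ, chromaticNumber_induce_univ] at hlt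

lemma MinForbUpsilon.eq_univ_of_maxDegree_le (h : MinForbUpsilon k G) {s : Finset V}
    (hs : s.Nonempty) (hΔ : G.maxDegree ≤ (G.induce (s : Set V)).maxDegree) :
    s = Finset.univ := by
  by_contra hne
  have : Nonempty (s : Set V) := hs.to_subtype
  refine h.chromaticNumber_add_lt.not_ge ?_
  calc (G.maxDegree + 1 : ℕ∞)
      ≤ (G.induce (s : Set V)).maxDegree + 1 := by gcongr
    _ ≤ (G.induce (s : Set V)).chromaticNumber + k := (h.2 s hne).maxDegree_add_one_le
    _ ≤ G.chromaticNumber + k := by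
      gcongr
      exact chromaticNumber_mono_of_hom (Embedding.induce _).toHom

end SimpleGraph

theorem minForbUpsilon_exists_dominating (k : ℕ) {V : Type*} [Fintype V]
    (G : SimpleGraph V) (h : MinForbUpsilon k G) :
    ∃ v : V, IsDominatingVertex G v := by
  have := h.nonempty
  obtain ⟨v, hv⟩ := G.exists_maximal_degree_vertex
  have hN : insert v (G.neighborFinset v) = Finset.univ := by
    refine h.eq_univ_of_maxDegree_le (Finset.insert_nonempty _ _) ?_
    rw [hv]
    exact degree_le_maxDegree_induce (by simp) fun x hx ↦ by simp [hx]
  refine ⟨v, fun w hwv ↦ ?_⟩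
  have hw := Finset.mem_univ w
  rw [← hN, Finset.mem_insert, mem_neighborFinset] at hw
  exact hw.resolve_left hwv
end

section
/- Let k ∈ ℕ₀ and let G be a graph. G is a minimal forbidden induced subgraph for Υ_k if and only if: (1) G has a unique dominating vertex v; (2) every color class in every optimal proper coloring of G - v has at least two vertices; and (3) Δ(G) = χ(G) + k. -/
open SimpleGraph

attribute [local instance] Classical.propDecidable

set_option linter.unnecessarySeqFocus false

/-!
Only `G` itself can violate the `Υ_k` inequality, at a vertex `v` with `deg v ≥ χ(G) + k`.
Deleting a non-neighbour of `v` would keep the violation, so `v` is dominating; deleting any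
other vertex `u` must repair it, which forces `Δ(G) = deg v = χ(G) + k` and `χ(G - u) = χ(G)`.
The latter fails exactly when an optimal colouring of `G - v` has a singleton class `{u}`:
`v` could take over its colour. Conversely, if no optimal colouring of `G - v` has a singleton
class, then deleting one vertex of `G - v` keeps its chromatic number and each further deletion
lowers it by at most one, which is precisely the slack every proper induced subgraph of `G`
needs; a second dominating vertex would be a singleton class.
-/

/- `toNat` is harmless: the chromatic number of a finite graph is finite. -/
local notation "χ " H:max => ENat.toNat (SimpleGraph.chromaticNumber H)

open Finset

namespace SimpleGraph

variable {V W : Type*} {G : SimpleGraph V} {H : SimpleGraph W}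

lemma toNat_chromaticNumber_induce_univ (G : SimpleGraph V) : χ (G.induce Set.univ) = χ G := by
  rw [chromaticNumber_congr G.induceUnivIso]

lemma toNat_chromaticNumber_induce_image (f : H ↪g G) (t : Set W) :
    χ (G.induce (f '' t)) = χ (H.induce t) := by
  rw [chromaticNumber_congr (f.comp (Embedding.induce t)).isoInduceRange]
  congr 3
  all_goals ext; simp

lemma exists_coloring_induce_eq_last_iff {s : Set V} {x : V} {n : ℕ}
    (C : (G.induce (s \ {x})).Coloring (Fin n)) :
    ∃ D : (G.induce s).Coloring (Fin (n + 1)), ∀ u, D u = Fin.last n ↔ u.1 = x := by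
  refine ⟨Coloring.mk
    (fun u => if h : u.1 = x then Fin.last n else (C ⟨u, u.2, h⟩).castSucc) ?_, fun u => ?_⟩
  · rintro ⟨a, ha⟩ ⟨b, hb⟩ hab
    have hab' : G.Adj a b := hab
    dsimp only
    split_ifs with hax hbx hbx
    · exact absurd (hax.trans hbx.symm) hab'.ne
    · exact (Fin.castSucc_lt_last _).ne'
    · exact (Fin.castSucc_lt_last _).ne
    · exact Fin.castSucc_injective _ |>.ne (C.valid hab)
  · by_cases h : u.1 = x <;> simp [Coloring.mk, h, (Fin.castSucc_lt_last _).ne]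

lemma colorable_induce_compl_of_forall_ne {v : V} {n : ℕ} (C : (G.induce {v}ᶜ).Coloring (Fin n))
    (u : ({v}ᶜ : Set V)) (hu : ∀ x, x ≠ u → C x ≠ C u) : (G.induce {u.1}ᶜ).Colorable n := by
  refine ⟨Coloring.mk (fun w => if h : w.1 = v then C u else C ⟨w, h⟩) ?_⟩
  rintro ⟨a, ha⟩ ⟨b, hb⟩ hab
  have hab' : G.Adj a b := hab
  dsimp only
  split_ifs with hav hbv hbv
  · exact absurd (hav.trans hbv.symm) hab'.ne
  · exact (hu ⟨b, hbv⟩ fun h => hb (congrArg Subtype.val h)).symm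
  · exact hu ⟨a, hav⟩ fun h => ha (congrArg Subtype.val h)
  · exact C.valid hab

section Finite

variable [Finite V]

lemma toNat_chromaticNumber_le_iff {n : ℕ} : χ G ≤ n ↔ G.Colorable n :=
  ⟨fun h => (colorable_chromaticNumber_of_fintype G).mono h,
    fun h => ENat.toNat_le_of_le_natCast h.chromaticNumber_le⟩

lemma coe_toNat_chromaticNumber : (χ G : ℕ∞) = G.chromaticNumber :=
  ENat.natCast_toNat
    (chromaticNumber_ne_top_iff_exists.2 ⟨_, colorable_chromaticNumber_of_fintype G⟩)

lemma one_le_toNat_chromaticNumber [Nonempty V] : 1 ≤ χ G := by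
  by_contra h
  have : G.Colorable 0 := toNat_chromaticNumber_le_iff.1 (by omega)
  exact (colorable_zero_iff.1 this).false (Classical.arbitrary V)

lemma toNat_chromaticNumber_induce_mono {s t : Set V} (h : s ⊆ t) :
    χ (G.induce s) ≤ χ (G.induce t) :=
  toNat_chromaticNumber_le_iff.2
    ((colorable_chromaticNumber_of_fintype _).of_hom (G.induceHomOfLE h).toHom)

lemma toNat_chromaticNumber_induce_le_diff_singleton_add_one (s : Set V) (x : V) :
    χ (G.induce s) ≤ χ (G.induce (s \ {x})) + 1 := by
  obtain ⟨D, -⟩ := exists_coloring_induce_eq_last_iff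
    (colorable_chromaticNumber_of_fintype (G.induce (s \ {x}))).some
  exact toNat_chromaticNumber_le_iff.2 ⟨D⟩

lemma toNat_chromaticNumber_induce_eq_diff_singleton_add_one {s : Set V} {v : V} (hv : v ∈ s)
    (hdom : ∀ w ∈ s, w ≠ v → G.Adj v w) :
    χ (G.induce s) = χ (G.induce (s \ {v})) + 1 := by
  refine le_antisymm (toNat_chromaticNumber_induce_le_diff_singleton_add_one s v) ?_
  obtain ⟨C⟩ := colorable_chromaticNumber_of_fintype (G.induce s)
  let D : (G.induce (s \ {v})).Coloring {c // c ≠ C ⟨v, hv⟩} := Coloring.mk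
    (fun u => ⟨C ⟨u, u.2.1⟩, fun h =>
      C.valid (v := ⟨v, hv⟩) (w := ⟨u, u.2.1⟩) (hdom u u.2.1 u.2.2) h.symm⟩)
    (fun {a b} hab h => C.valid (v := ⟨a, a.2.1⟩) (w := ⟨b, b.2.1⟩) hab (congrArg Subtype.val h))
  have hD := toNat_chromaticNumber_le_iff.2 D.colorable
  rw [Fintype.card_subtype_compl, Fintype.card_subtype_eq, Fintype.card_fin] at hD
  have := (C ⟨v, hv⟩).pos
  omega

end Finite

lemma degree_induce_eq_card_filter [Fintype V] (s : Finset V) (v : (s : Set V)) :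
    (G.induce s).degree v = #{w ∈ s | G.Adj v w} := by
  rw [← card_neighborFinset_eq_degree, ← card_map (.subtype (· ∈ (s : Set V)))]
  congr 1
  ext
  simp [and_comm]

end SimpleGraph

section AllColorClassesBig

variable {V W : Type*} [Fintype V] {G : SimpleGraph V} {H : SimpleGraph W} [Fintype W]

lemma allColorClassesBig_iff :
    AllColorClassesBig H ↔ ∀ (n : ℕ) (C : H.Coloring (Fin n)), (n : ℕ∞) = H.chromaticNumber →
      ∀ u, ∃ x ≠ u, C x = C u := by
  refine forall₂_congr fun n C => imp_congr_right fun _ => ⟨fun h u => ?_, fun h c => ?_⟩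
  · obtain ⟨x, hx⟩ := Fintype.exists_ne_of_one_lt_card (h (C u) ⟨u, rfl⟩) ⟨u, rfl⟩
    exact ⟨x, fun h => hx (Subtype.ext h), x.2⟩
  · rintro ⟨u, rfl⟩
    obtain ⟨x, hxu, hx⟩ := h u
    exact Fintype.one_lt_card_iff.2 ⟨⟨x, hx⟩, ⟨u, rfl⟩, fun h => hxu (congrArg Subtype.val h)⟩

lemma AllColorClassesBig.exists_ne_not_adj (h : AllColorClassesBig H) (w : W) :
    ∃ u ≠ w, ¬ H.Adj w u := by
  obtain ⟨C⟩ := colorable_chromaticNumber_of_fintype H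
  obtain ⟨u, hu, hC⟩ := allColorClassesBig_iff.1 h _ C coe_toNat_chromaticNumber w
  exact ⟨u, hu, fun hadj => C.valid hadj hC.symm⟩

lemma AllColorClassesBig.toNat_chromaticNumber_le_diff_singleton {T : Set V} [Fintype T]
    (h : AllColorClassesBig (G.induce T)) {w : V} (hw : w ∈ T) :
    χ (G.induce T) ≤ χ (G.induce (T \ {w})) := by
  by_contra hlt
  obtain ⟨D, hD⟩ := exists_coloring_induce_eq_last_iff
    (colorable_chromaticNumber_of_fintype (G.induce (T \ {w}))).some
  have hopt : ((χ (G.induce (T \ {w})) + 1 : ℕ) : ℕ∞) = (G.induce T).chromaticNumber := by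
    have := toNat_chromaticNumber_le_iff.2 ⟨D⟩
    rw [← coe_toNat_chromaticNumber (G := G.induce T),
      (by omega : χ (G.induce (T \ {w})) + 1 = χ (G.induce T))]
  obtain ⟨x, hx, hDx⟩ := allColorClassesBig_iff.1 h _ D hopt ⟨w, hw⟩
  exact hx (Subtype.ext ((hD x).1 (hDx.trans ((hD _).2 rfl))))

lemma AllColorClassesBig.toNat_chromaticNumber_add_one_le {T : Set V} [Fintype T]
    (h : AllColorClassesBig (G.induce T)) {r : Finset V} (hr : r.Nonempty)
    (hrT : (r : Set V) ⊆ T) :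
    χ (G.induce T) + 1 ≤ χ (G.induce (T \ (r : Set V))) + #r := by
  -- the first deletion keeps `χ` by `h`, each further one lowers it by at most one
  induction hr using Finset.Nonempty.cons_induction with
  | singleton a =>
    rw [coe_singleton, card_singleton]
    exact Nat.add_le_add_right (h.toNat_chromaticNumber_le_diff_singleton (hrT (by simp))) 1
  | cons a r ha hr ih =>
    have hstep := toNat_chromaticNumber_induce_le_diff_singleton_add_one (G := G) (T \ (r : Set V)) a
    have hdiff : T \ ((r.cons a ha : Finset V) : Set V) = (T \ (r : Set V)) \ {a} := by
      ext
      simp only [coe_cons, Set.mem_sdiff, Set.mem_insert_iff, Set.mem_singleton_iff]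
      tauto
    rw [hdiff, card_cons]
    have := ih (fun x hx => hrT (by simp [hx]))
    omega

end AllColorClassesBig

section DegreeBound

variable {V W : Type*} {G : SimpleGraph V} {k : ℕ}

/-- The `Υ_k` inequality for `G[s]`, where `#{w ∈ s | G.Adj v w}` is the degree of `v` in `G[s]`. -/
def DegreeBound (k : ℕ) (G : SimpleGraph V) (s : Finset V) : Prop :=
  ∀ v ∈ s, #{w ∈ s | G.Adj v w} + 1 ≤ χ (G.induce s) + k

lemma degreeBound_map_iff {H : SimpleGraph W} (f : H ↪g G) (t : Finset W) :
    DegreeBound k G (t.map f.toEmbedding) ↔ DegreeBound k H t := by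
  rw [DegreeBound, DegreeBound, coe_map, ← toNat_chromaticNumber_induce_image f]
  simp [filter_map]

lemma maxDegree_induce_add_one_le_iff [Fintype V] {s : Finset V} (hs : s.Nonempty) :
    ((G.induce s).maxDegree + 1 : ℕ∞) ≤ (G.induce s).chromaticNumber + k ↔
      DegreeBound k G s := by
  rw [← coe_toNat_chromaticNumber]
  norm_cast
  refine ⟨fun h v hv => ?_, fun h => ?_⟩
  · rw [← degree_induce_eq_card_filter s ⟨v, hv⟩]
    exact (Nat.add_le_add_right (degree_le_maxDegree _ _) 1).trans h
  · have : Nonempty (s : Set V) := hs.coe_sort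
    obtain ⟨v, hv⟩ := (G.induce s).exists_maximal_degree_vertex
    rw [hv, degree_induce_eq_card_filter]
    exact h v v.2

lemma upsilonMem_iff [Fintype V] : UpsilonMem k G ↔ ∀ s, DegreeBound k G s := by
  refine forall_congr' fun s => ⟨fun h => ?_, fun h hs => (maxDegree_induce_add_one_le_iff hs).2 h⟩
  rcases s.eq_empty_or_nonempty with rfl | hs
  · simp [DegreeBound]
  · exact (maxDegree_induce_add_one_le_iff hs).1 (h hs)

lemma upsilonMem_induce_iff (s : Finset V) :
    UpsilonMem k (G.induce s) ↔ ∀ t ⊆ s, DegreeBound k G t := by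
  rw [upsilonMem_iff]
  refine ⟨fun h t hts => ?_, fun h t => ?_⟩
  · have := (degreeBound_map_iff (Embedding.induce (s : Set V)) (t.subtype (· ∈ s))).2 (h _)
    rwa [← subtype_map_of_mem hts]
  · refine (degreeBound_map_iff (Embedding.induce (s : Set V)) t).1 (h _ ?_)
    intro x hx
    obtain ⟨y, -, rfl⟩ := mem_map.1 hx
    exact y.2

variable [Fintype V]

lemma minForbUpsilon_iff_degreeBound :
    MinForbUpsilon k G ↔ ¬ DegreeBound k G univ ∧ ∀ s ≠ univ, DegreeBound k G s := by
  rw [MinForbUpsilon, upsilonMem_iff]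
  simp only [upsilonMem_induce_iff]
  refine ⟨fun ⟨hnot, hmin⟩ => ⟨fun h => hnot fun s => ?_, fun s hs => hmin s hs s subset_rfl⟩,
    fun ⟨hnot, hmin⟩ => ⟨fun h => hnot (h univ), fun s hs t hts => hmin t ?_⟩⟩
  · by_cases hs : s = univ
    · exact hs ▸ h
    · exact hmin s hs s subset_rfl
  · rintro rfl
    exact hs (univ_subset_iff.1 hts)

lemma degreeBound_univ_iff : DegreeBound k G univ ↔ ∀ v, G.degree v + 1 ≤ χ G + k := by
  rw [DegreeBound, coe_univ, toNat_chromaticNumber_induce_univ]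
  simp [← card_neighborFinset_eq_degree, neighborFinset_eq_filter]

lemma DegreeBound.card_erase_neighborFinset_add_one_le {v w : V}
    (h : DegreeBound k G (univ.erase w)) (hvw : v ≠ w) :
    #((G.neighborFinset v).erase w) + 1 ≤ χ (G.induce {w}ᶜ) + k := by
  have := h v (mem_erase.2 ⟨hvw, mem_univ v⟩)
  rwa [filter_erase, ← neighborFinset_eq_filter, coe_erase, coe_univ,
    ← Set.compl_eq_univ_sdiff] at this

end DegreeBound

section DominatingVertex

variable {V : Type*} {G : SimpleGraph V} {k : ℕ}

lemma IsDominatingVertex.isUniversal {v : V} (hv : IsDominatingVertex G v) : G.IsUniversal v :=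
  fun _ hw => hv _ (Ne.symm hw)

lemma card_filter_adj_lt {s : Finset V} {v : V} (hv : v ∈ s) : #{w ∈ s | G.Adj v w} < #s :=
  card_lt_card (filter_ssubset.2 ⟨v, hv, G.loopless.irrefl v⟩)

lemma card_filter_adj_add_two_le {s : Finset V} {u v : V} (hv : v ∈ s) (hu : u ∈ s) (huv : u ≠ v)
    (hnadj : ¬ G.Adj v u) : #{w ∈ s | G.Adj v w} + 2 ≤ #s := by
  have hsub : {w ∈ s | G.Adj v w} ⊆ (s.erase v).erase u := fun w hw => by
    obtain ⟨hws, hadj⟩ := mem_filter.1 hw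
    exact mem_erase.2 ⟨fun h => hnadj (h ▸ hadj), mem_erase.2 ⟨hadj.ne', hws⟩⟩
  have := card_le_card hsub
  rw [card_erase_of_mem (mem_erase.2 ⟨huv, hu⟩), card_erase_of_mem hv] at this
  have := one_lt_card.2 ⟨v, hv, u, hu, huv.symm⟩
  omega

variable [Fintype V]

lemma IsDominatingVertex.degree_add_one {v : V} (hv : IsDominatingVertex G v) :
    G.degree v + 1 = Fintype.card V := by
  have := Fintype.card_pos_iff.2 ⟨v⟩
  rw [(G.degree_eq_card_sub_one v).2 hv.isUniversal]
  omega

lemma IsDominatingVertex.maxDegree_eq {v : V} (hv : IsDominatingVertex G v) :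
    G.maxDegree = G.degree v := by
  refine le_antisymm (maxDegree_le_of_forall_degree_le _ _ fun w => ?_) (degree_le_maxDegree _ _)
  have := G.degree_lt_card_verts w
  have := hv.degree_add_one
  omega

lemma IsDominatingVertex.toNat_chromaticNumber_eq {v : V} (hv : IsDominatingVertex G v) :
    χ G = χ (G.induce {v}ᶜ) + 1 := by
  rw [← toNat_chromaticNumber_induce_univ, Set.compl_eq_univ_sdiff,
    toNat_chromaticNumber_induce_eq_diff_singleton_add_one (Set.mem_univ v) fun w _ hw => hv w hw]

lemma IsDominatingVertex.eq_of_allColorClassesBig {v w : V} (hw : IsDominatingVertex G w)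
    (hbig : AllColorClassesBig (G.induce {v}ᶜ)) : w = v := by
  by_contra hwv
  obtain ⟨u, hu, hnadj⟩ := hbig.exists_ne_not_adj ⟨w, hwv⟩
  exact hnadj (hw u fun h => hu (Subtype.ext h))

lemma IsDominatingVertex.allColorClassesBig {v : V} (hv : IsDominatingVertex G v)
    (hχ : ∀ u ≠ v, χ G ≤ χ (G.induce {u}ᶜ)) : AllColorClassesBig (G.induce {v}ᶜ) := by
  refine allColorClassesBig_iff.2 fun n C hn u => ?_
  by_contra! hsingle
  -- `v` can take over the colour of the singleton class `{u}`
  have h1 := toNat_chromaticNumber_le_iff.2 (colorable_induce_compl_of_forall_ne C u hsingle)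
  have h2 : n = χ (G.induce {v}ᶜ) := by rw [← hn, ENat.toNat_natCast]
  have := hv.toNat_chromaticNumber_eq
  have := hχ u u.2
  omega

lemma exists_isDominatingVertex_of_minimal (hnot : ¬ DegreeBound k G univ)
    (hmin : ∀ s ≠ univ, DegreeBound k G s) :
    ∃ v, IsDominatingVertex G v ∧ G.degree v = χ G + k ∧ AllColorClassesBig (G.induce {v}ᶜ) := by
  obtain ⟨v, hv⟩ : ∃ v, χ G + k < G.degree v + 1 := by simpa [degreeBound_univ_iff] using hnot
  have hbound (w : V) (hw : w ≠ v) :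
      #((G.neighborFinset v).erase w) + 1 ≤ χ (G.induce {w}ᶜ) + k :=
    (hmin _ (erase_ssubset (mem_univ w)).ne).card_erase_neighborFinset_add_one_le hw.symm
  have hχ (w : V) : χ (G.induce {w}ᶜ) ≤ χ G :=
    toNat_chromaticNumber_induce_univ G ▸ toNat_chromaticNumber_induce_mono (Set.subset_univ _)
  have hdom : IsDominatingVertex G v := by
    intro w hw
    by_contra hnadj
    have := hbound w hw
    rw [erase_eq_of_notMem (by simpa using hnadj), card_neighborFinset_eq_degree] at this
    have := hχ w
    omega
  have hdeg_le (u : V) (hu : u ≠ v) : G.degree v ≤ χ (G.induce {u}ᶜ) + k := by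
    have := hbound u hu
    rw [card_erase_of_mem (by simpa using hdom u hu), card_neighborFinset_eq_degree] at this
    have := (hdom u hu).degree_pos_left
    omega
  have : Nonempty V := ⟨v⟩
  have := one_le_toNat_chromaticNumber (G := G)
  obtain ⟨u, hu⟩ := (G.degree_pos_iff_exists_adj v).1 (by omega)
  have hdeg : G.degree v = χ G + k := by
    have := hdeg_le u hu.ne'
    have := hχ u
    omega
  refine ⟨v, hdom, hdeg, hdom.allColorClassesBig fun u hu => ?_⟩
  have := hdeg_le u hu
  omega

lemma AllColorClassesBig.card_le_toNat_chromaticNumber_add {v : V}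
    (hbig : AllColorClassesBig (G.induce {v}ᶜ)) (hk : χ (G.induce {v}ᶜ) + k + 2 = Fintype.card V)
    {t : Finset V} (hvt : v ∉ t) (ht : t ≠ univ.erase v) : #t ≤ χ (G.induce t) + k := by
  set r := univ \ insert v t with hr_def
  have hr : r.Nonempty :=
    sdiff_nonempty.2 fun h => ht (by rw [← erase_insert hvt, univ_subset_iff.1 h])
  have hrv : (r : Set V) ⊆ {v}ᶜ := fun x hx h => by
    simp only [hr_def, coe_sdiff, coe_univ, coe_insert, Set.mem_sdiff, Set.mem_insert_iff] at hx
    exact hx.2 (Or.inl h)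
  have hdiff : ({v}ᶜ : Set V) \ (r : Set V) = t := by
    ext x
    by_cases hx : x = v
    · simp [hx, hvt]
    · simp [hr_def, hx]
  have hcard := card_sdiff_add_card_eq_card (subset_univ (insert v t))
  rw [← hr_def, card_univ, card_insert_of_notMem hvt] at hcard
  have := hbig.toNat_chromaticNumber_add_one_le hr hrv
  rw [hdiff] at this
  omega

lemma degreeBound_of_ne_univ {v : V} (hv : IsDominatingVertex G v)
    (hbig : AllColorClassesBig (G.induce {v}ᶜ)) (hdeg : G.degree v = χ G + k) {t : Finset V}
    (ht : t ≠ univ) : DegreeBound k G t := by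
  have := hv.degree_add_one
  have := hv.toNat_chromaticNumber_eq
  have hk : χ (G.induce {v}ᶜ) + k + 2 = Fintype.card V := by omega
  intro x hx
  have := card_filter_adj_lt (G := G) hx
  by_cases hvt : v ∈ t
  · have hsub := hbig.card_le_toNat_chromaticNumber_add hk (notMem_erase v t) fun h =>
      ht (by rw [← insert_erase hvt, h, insert_erase (mem_univ v)])
    rw [toNat_chromaticNumber_induce_eq_diff_singleton_add_one (mem_coe.2 hvt)
      fun w _ hw => hv w hw, ← coe_erase]
    have := card_erase_add_one hvt
    omega
  · by_cases htv : t = univ.erase v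
    · subst htv
      obtain ⟨u, hu, hnadj⟩ := hbig.exists_ne_not_adj ⟨x, ne_of_mem_erase hx⟩
      have := card_filter_adj_add_two_le hx (mem_erase.2 ⟨u.2, mem_univ _⟩)
        (fun h => hu (Subtype.ext h)) hnadj
      have : #(univ.erase v) + 1 = Fintype.card V := card_erase_add_one (mem_univ v)
      rw [coe_erase, coe_univ, ← Set.compl_eq_univ_sdiff]
      omega
    · have := hbig.card_le_toNat_chromaticNumber_add hk hvt htv
      omega

end DominatingVertex

theorem minForbUpsilon_iff (k : ℕ) {V : Type*} [Fintype V] (G : SimpleGraph V) :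
    MinForbUpsilon k G ↔
      (∃ v : V, IsDominatingVertex G v ∧ (∀ w, IsDominatingVertex G w → w = v) ∧
          AllColorClassesBig (G.induce ({v}ᶜ : Set V))) ∧
        (G.maxDegree : ℕ∞) = G.chromaticNumber + (k : ℕ∞) := by
  have hΔ : (G.maxDegree : ℕ∞) = G.chromaticNumber + k ↔ G.maxDegree = χ G + k := by
    rw [← coe_toNat_chromaticNumber (G := G)]
    norm_cast
  rw [minForbUpsilon_iff_degreeBound, hΔ]
  constructor
  · rintro ⟨hnot, hmin⟩
    obtain ⟨v, hv, hdeg, hbig⟩ := exists_isDominatingVertex_of_minimal hnot hmin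
    exact ⟨⟨v, hv, fun w hw => hw.eq_of_allColorClassesBig hbig, hbig⟩, hv.maxDegree_eq.trans hdeg⟩
  · rintro ⟨⟨v, hv, -, hbig⟩, hΔ⟩
    rw [hv.maxDegree_eq] at hΔ
    refine ⟨fun h => ?_, fun s hs => degreeBound_of_ne_univ hv hbig hΔ hs⟩
    have := degreeBound_univ_iff.1 h v
    omega
end

section
/- If G is a minimal forbidden induced subgraph for Υ_k, then 2χ(G) - 2 ≤ Δ(G) ≤ 2k + 2 and 2 ≤ χ(G) ≤ k + 2. In particular, |V(G)| ≤ 2k + 3. -/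
open SimpleGraph

attribute [local instance] Classical.propDecidable

set_option linter.unnecessarySeqFocus false

/-!
Let `c = χ(G)`. Only `G` itself violates `Δ + 1 ≤ χ + k`, so `Δ ≥ c + k`, while every `G - u`
satisfies it. A vertex `v` of maximum degree is dominating (deleting a non-neighbour would keep
`Δ` and a `c`-colouring), and deleting a neighbour of `v` gives `Δ ≤ c + k`; hence `Δ = c + k`
and `|V| = Δ + 1`. In a `c`-colouring `v` is alone in its class. If another colour `b` were used
by no vertex other than `u`, recolouring `v` with `b` would make `G - u` `(c - 1)`-colourable
while `v` keeps degree `Δ - 1` there, a contradiction. So the other `c - 1` classes have at least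
two vertices each, and `2 (c - 1) ≤ |V| - 1 = c + k`.
-/

open Finset

lemma SimpleGraph.Colorable.induce {V : Type*} {G : SimpleGraph V} {n : ℕ} (hG : G.Colorable n)
    (s : Set V) : (G.induce s).Colorable n :=
  hG.of_hom (Embedding.induce s).toHom

lemma SimpleGraph.colorable_of_chromaticNumber_eq {V : Type*} {G : SimpleGraph V} {n : ℕ}
    (h : G.chromaticNumber = n) : G.Colorable n :=
  chromaticNumber_le_iff_colorable.mp h.le

section General

variable {V : Type*} [Fintype V] {G : SimpleGraph V}

def SimpleGraph.induceFinsetUnivIso_s7 (G : SimpleGraph V) :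
    G.induce ((univ : Finset V) : Set V) ≃g G where
  toEquiv := Equiv.subtypeUnivEquiv fun v => by simp
  map_rel_iff' := Iff.rfl

lemma SimpleGraph.degree_induce_finset (s : Finset V) (v : (s : Set V)) :
    (G.induce (s : Set V)).degree v = #(G.neighborFinset v ∩ s) := by
  have h := map_neighborFinset_induce (G := G) (s := (s : Set V)) v
  rw [toFinset_coe] at h
  rw [← h, card_map]
  convert (card_neighborFinset_eq_degree _ _).symm

lemma SimpleGraph.degree_induce_erase (u : V) (v : ((univ.erase u : Finset V) : Set V)) :
    (G.induce ((univ.erase u : Finset V) : Set V)).degree v =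
      #((G.neighborFinset v).erase u) := by
  rw [degree_induce_finset, inter_erase, inter_univ]

lemma IsDominatingVertex.degree_eq {v : V} (hv : IsDominatingVertex G v) :
    G.degree v = Fintype.card V - 1 := by
  have : G.neighborFinset v = univ.erase v := by
    ext w
    simp only [mem_neighborFinset, mem_erase, mem_univ, and_true]
    exact ⟨fun hw => hw.ne', hv w⟩
  rw [← card_neighborFinset_eq_degree, this, card_erase_of_mem (mem_univ v), card_univ]

lemma IsDominatingVertex.colorable_induce_erase {α : Type*} [Fintype α] {v : V}
    (hv : IsDominatingVertex G v) (C : G.Coloring α) {b : α} (hb : b ≠ C v) {u : V}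
    (hu : ∀ w, C w = b → w = u) :
    (G.induce ((univ.erase u : Finset V) : Set V)).Colorable (Fintype.card α - 1) := by
  have hCv : ∀ w, w ≠ v → C w ≠ C v := fun w hw => (C.valid (hv w hw)).symm
  let C' : (G.induce ((univ.erase u : Finset V) : Set V)).Coloring {a // a ≠ C v} :=
    Coloring.mk (fun w => if hw : (w : V) = v then ⟨b, hb⟩ else ⟨C w, hCv w hw⟩) <| by
      rintro ⟨x, hx⟩ ⟨y, hy⟩ hxy
      have hxy : G.Adj x y := hxy
      have hxu : x ≠ u := by simpa using hx
      have hyu : y ≠ u := by simpa using hy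
      by_cases hxv : x = v <;> by_cases hyv : y = v
      · exact absurd (hxv.trans hyv.symm) hxy.ne
      · simpa [hxv, hyv] using fun h => hyu (hu y h.symm)
      · simpa [hxv, hyv] using fun h => hxu (hu x h)
      · simpa [hxv, hyv] using C.valid hxy
  simpa [Fintype.card_subtype_compl] using C'.colorable

end General

section Upsilon

variable {k : ℕ} {V : Type*} [Fintype V] {G : SimpleGraph V}

lemma UpsilonMem.maxDegree_add_one_le [Nonempty V] (h : UpsilonMem k G) :
    (G.maxDegree + 1 : ℕ∞) ≤ G.chromaticNumber + k := by
  have e := G.induceFinsetUnivIso_s7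
  simpa only [Iso.maxDegree_eq e, chromaticNumber_congr e] using h univ univ_nonempty

lemma UpsilonMem.degree_add_one_le (h : UpsilonMem k G) {m : ℕ} (hm : G.Colorable m) (v : V) :
    G.degree v + 1 ≤ m + k := by
  have : Nonempty V := ⟨v⟩
  have h' : ((G.maxDegree + 1 : ℕ) : ℕ∞) ≤ (m + k : ℕ) := by
    push_cast
    exact h.maxDegree_add_one_le.trans (add_le_add_left hm.chromaticNumber_le _)
  have := G.degree_le_maxDegree v
  have : G.maxDegree + 1 ≤ m + k := by exact_mod_cast h'
  omega

end Upsilon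

namespace MinForbUpsilon

variable {k c : ℕ} {V : Type*} [Fintype V] {G : SimpleGraph V}

lemma chromaticNumber_add_le_maxDegree (h : MinForbUpsilon k G) :
    G.chromaticNumber + k ≤ G.maxDegree := by
  obtain ⟨s, hs, hlt⟩ := by simpa [UpsilonMem] using h.1
  obtain rfl : s = univ := by
    by_contra hs_univ
    have : Nonempty (s : Set V) := hs.coe_sort
    exact hlt.not_ge (h.2 s hs_univ).maxDegree_add_one_le
  have e := G.induceFinsetUnivIso_s7
  rw [Iso.maxDegree_eq e, chromaticNumber_congr e] at hlt
  exact Order.le_of_lt_add_one hlt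

lemma nonempty (h : MinForbUpsilon k G) : Nonempty V := by
  by_contra hV
  rw [not_nonempty_iff] at hV
  exact h.1 fun s hs => absurd hs (by simp [eq_empty_of_isEmpty s])

lemma add_le_maxDegree (h : MinForbUpsilon k G) (hc : G.chromaticNumber = c) :
    c + k ≤ G.maxDegree := by
  exact_mod_cast hc ▸ h.chromaticNumber_add_le_maxDegree

lemma pos (h : MinForbUpsilon k G) (hc : G.chromaticNumber = c) : 0 < c := by
  have := h.nonempty
  refine Nat.pos_of_ne_zero fun hc0 => ?_
  rw [hc0, Nat.cast_zero, chromaticNumber_eq_zero_iff] at hc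
  exact not_isEmpty_of_nonempty V hc

lemma card_erase_neighborFinset_add_one_le (h : MinForbUpsilon k G) {u v : V} (huv : v ≠ u)
    {m : ℕ} (hm : (G.induce ((univ.erase u : Finset V) : Set V)).Colorable m) :
    #((G.neighborFinset v).erase u) + 1 ≤ m + k := by
  have hv : v ∈ ((univ.erase u : Finset V) : Set V) := by simpa using huv
  rw [← degree_induce_erase u ⟨v, hv⟩]
  exact (h.2 _ (by simp)).degree_add_one_le hm _

lemma isDominatingVertex (h : MinForbUpsilon k G) (hc : G.chromaticNumber = c) {v : V}
    (hv : G.degree v = G.maxDegree) : IsDominatingVertex G v := by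
  intro u huv
  by_contra hvu
  have := h.card_erase_neighborFinset_add_one_le huv.symm
    ((colorable_of_chromaticNumber_eq hc).induce _)
  rw [erase_eq_of_notMem (by simpa using hvu), card_neighborFinset_eq_degree, hv] at this
  have := h.add_le_maxDegree hc
  omega

lemma exists_adj (h : MinForbUpsilon k G) (hc : G.chromaticNumber = c) {v : V}
    (hv : G.degree v = G.maxDegree) : ∃ u, G.Adj v u := by
  rw [← degree_pos_iff_exists_adj, hv]
  have := h.add_le_maxDegree hc
  have := h.pos hc
  omega

lemma maxDegree_eq (h : MinForbUpsilon k G) (hc : G.chromaticNumber = c) :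
    G.maxDegree = c + k := by
  have := h.nonempty
  obtain ⟨v, hv⟩ := G.exists_maximal_degree_vertex
  obtain ⟨u, hvu⟩ := h.exists_adj hc hv.symm
  have := h.card_erase_neighborFinset_add_one_le hvu.ne
    ((colorable_of_chromaticNumber_eq hc).induce _)
  rw [card_erase_of_mem ((G.mem_neighborFinset v u).2 hvu), card_neighborFinset_eq_degree,
    ← hv] at this
  have := h.add_le_maxDegree hc
  omega

lemma card_eq (h : MinForbUpsilon k G) (hc : G.chromaticNumber = c) :
    Fintype.card V = c + k + 1 := by
  have := h.nonempty
  obtain ⟨v, hv⟩ := G.exists_maximal_degree_vertex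
  have := (h.isDominatingVertex hc hv.symm).degree_eq
  have := h.maxDegree_eq hc
  have : 0 < Fintype.card V := Fintype.card_pos
  omega

lemma not_colorable_induce_erase (h : MinForbUpsilon k G) (hc : G.chromaticNumber = c) {u v : V}
    (hv : G.degree v = G.maxDegree) (huv : u ≠ v) :
    ¬ (G.induce ((univ.erase u : Finset V) : Set V)).Colorable (c - 1) := by
  intro hcol
  have := h.card_erase_neighborFinset_add_one_le huv.symm hcol
  rw [card_erase_of_mem ((G.mem_neighborFinset v u).2 (h.isDominatingVertex hc hv u huv)),
    card_neighborFinset_eq_degree, hv, h.maxDegree_eq hc] at this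
  have := h.pos hc
  omega

lemma exists_ne_of_coloring (h : MinForbUpsilon k G) (hc : G.chromaticNumber = c) {v : V}
    (hv : G.degree v = G.maxDegree) (C : G.Coloring (Fin c)) {b : Fin c} (hb : b ≠ C v) {u : V}
    (huv : u ≠ v) : ∃ w ≠ u, C w = b := by
  by_contra! hw
  have := (h.isDominatingVertex hc hv).colorable_induce_erase C hb
    (fun w hwb => by_contra fun hwu => hw w hwu hwb)
  exact h.not_colorable_induce_erase hc hv huv (by simpa using this)

lemma le_add_two (h : MinForbUpsilon k G) (hc : G.chromaticNumber = c) : c ≤ k + 2 := by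
  have := h.nonempty
  obtain ⟨v, hv⟩ := G.exists_maximal_degree_vertex
  obtain ⟨u, hvu⟩ := h.exists_adj hc hv.symm
  obtain ⟨C⟩ := colorable_of_chromaticNumber_eq hc
  have hdom := h.isDominatingVertex hc hv.symm
  have hcount : 2 * #(univ.erase (C v)) ≤ #(univ.erase v) := by
    refine mul_card_image_le_card_of_maps_to (f := C) (fun w hw => ?_) 2 fun b hb => ?_
    · simpa using (C.valid (hdom w (ne_of_mem_erase hw))).symm
    · have hb := ne_of_mem_erase hb
      have hne_v : ∀ w, C w = b → w ≠ v := by rintro w hw rfl; exact hb hw.symm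
      obtain ⟨w₁, -, hw₁⟩ := h.exists_ne_of_coloring hc hv.symm C hb hvu.ne'
      obtain ⟨w₂, hw₂₁, hw₂⟩ := h.exists_ne_of_coloring hc hv.symm C hb (hne_v w₁ hw₁)
      exact one_lt_card.2 ⟨w₁, by simp [hw₁, hne_v w₁ hw₁], w₂, by simp [hw₂, hne_v w₂ hw₂],
        hw₂₁.symm⟩
  simp only [card_erase_of_mem (mem_univ _), card_univ, Fintype.card_fin, h.card_eq hc] at hcount
  have := h.pos hc
  omega

end MinForbUpsilon

theorem minForbUpsilon_bounds (k : ℕ) {V : Type*} [Fintype V]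
    (G : SimpleGraph V) (h : MinForbUpsilon k G) :
    2 * G.chromaticNumber - 2 ≤ (G.maxDegree : ℕ∞) ∧
      G.maxDegree ≤ 2 * k + 2 ∧
      2 ≤ G.chromaticNumber ∧ G.chromaticNumber ≤ (k : ℕ∞) + 2 ∧
      Fintype.card V ≤ 2 * k + 3 := by
  obtain ⟨c, hc⟩ : ∃ c : ℕ, G.chromaticNumber = c :=
    (ENat.ne_top_iff_exists.mp (chromaticNumber_ne_top_iff_exists.mpr
      ⟨_, G.colorable_of_fintype⟩)).imp fun _ => Eq.symm
  have := h.nonempty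
  obtain ⟨v, hv⟩ := G.exists_maximal_degree_vertex
  obtain ⟨u, hvu⟩ := h.exists_adj hc hv.symm
  have hΔ := h.maxDegree_eq hc
  have hcard := h.card_eq hc
  have hck := h.le_add_two hc
  refine ⟨?_, by omega, two_le_chromaticNumber_of_adj hvu, by rw [hc]; exact_mod_cast hck,
    by omega⟩
  rw [hc, tsub_le_iff_right]
  exact_mod_cast (by omega : 2 * c ≤ G.maxDegree + 2)
end

section
/- For every k ∈ ℕ₀, the set of minimal forbidden induced subgraphs of Υ_k is finite (up to isomorphism), since each such graph has at most 2k + 3 vertices. -/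
open SimpleGraph

attribute [local instance] Classical.propDecidable

set_option linter.unnecessarySeqFocus false

/-!
Let `G` be minimal forbidden on `n` vertices, with `χ = χ(G)` and `Δ = Δ(G)`. Only `G` itself
violates the bound, so `χ + k ≤ Δ`. A vertex `v` of maximum degree is adjacent to all others:
deleting a non-neighbour keeps `deg v = Δ` and does not raise `χ`, so the bound would fail in a
proper induced subgraph. Hence `Δ = n - 1`. Deleting any other vertex `u` lowers `deg v` by one,
so `Δ ≤ χ(G - u) + k ≤ χ + k`; thus `Δ = χ + k` and `χ(G - u) = χ`. In an optimal colouring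
every colour class other than that of `v` therefore has at least two vertices (a class `{u}`
could be dropped along with `u`), so `n ≥ 2χ - 1`. With `n = χ + k + 1` this gives `χ ≤ k + 2`,
i.e. `n ≤ 2k + 3`.
-/

open scoped Finset

namespace SimpleGraph

def Iso.induceFinsetMap {V W : Type*} {G : SimpleGraph V} {G' : SimpleGraph W} (f : G ≃g G')
    (s : Finset W) : G.induce (s.map f.symm.toEquiv.toEmbedding) ≃g G'.induce s :=
  f.induce (by rw [Finset.coe_map]; exact f.symm.toEquiv.bijOn_symm_image)

variable {V : Type*} [Fintype V]

lemma coe_toNat_chromaticNumber_s8 (G : SimpleGraph V) :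
    (G.chromaticNumber.toNat : ℕ∞) = G.chromaticNumber :=
  ENat.natCast_toNat <|
    chromaticNumber_ne_top_iff_exists.mpr ⟨_, G.colorable_chromaticNumber_of_fintype⟩

lemma toNat_chromaticNumber_induce_le (G : SimpleGraph V) (s : Set V) :
    (G.induce s).chromaticNumber.toNat ≤ G.chromaticNumber.toNat := by
  rw [← ENat.natCast_le_natCast, coe_toNat_chromaticNumber_s8, coe_toNat_chromaticNumber_s8]
  exact chromaticNumber_mono_of_hom (Embedding.induce s).toHom

lemma degree_induce_coe_finset (G : SimpleGraph V) (s : Finset V) (v : (s : Set V)) :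
    (G.induce s).degree v = #(G.neighborFinset v ∩ s) := by
  have h := congrArg Finset.card (G.map_neighborFinset_induce v)
  rw [Finset.card_map, card_neighborFinset_eq_degree] at h
  convert h using 2
  simp

theorem two_mul_toNat_chromaticNumber_le_card_add_one {G : SimpleGraph V} (v : V)
    (h : ∀ u ≠ v, G.chromaticNumber ≤ (G.induce {u}ᶜ).chromaticNumber) :
    2 * G.chromaticNumber.toNat ≤ Fintype.card V + 1 := by
  set n := G.chromaticNumber.toNat
  have hn : G.chromaticNumber = n := (coe_toNat_chromaticNumber_s8 G).symm
  obtain ⟨C⟩ := G.colorable_chromaticNumber_of_fintype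
  have hC : Function.Surjective C := le_chromaticNumber_iff_forall_surjective.mp hn.ge C
  have hclass : ∀ i ≠ C v, 2 ≤ #{w | C w = i} := by
    intro i hi
    obtain ⟨u, rfl⟩ := hC i
    have huv : u ≠ v := by rintro rfl; exact hi rfl
    obtain ⟨⟨w, hwu⟩, hw⟩ := le_chromaticNumber_iff_forall_surjective.mp (hn ▸ h u huv)
      (C.comp (Embedding.induce {u}ᶜ).toHom) (C u)
    exact Finset.one_lt_card.mpr ⟨u, by simp, w, by simpa using hw, fun hwu' => hwu hwu'.symm⟩
  have hv : 1 ≤ #{w | C w = C v} := Finset.card_pos.mpr ⟨v, by simp⟩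
  have hrest : (n - 1) * 2 ≤ ∑ i ∈ Finset.univ.erase (C v), #{w | C w = i} := by
    simpa [Finset.card_erase_of_mem] using Finset.card_nsmul_le_sum (Finset.univ.erase (C v)) _ 2
      fun i hi => hclass i (Finset.ne_of_mem_erase hi)
  have hsum : Fintype.card V =
      #{w | C w = C v} + ∑ i ∈ Finset.univ.erase (C v), #{w | C w = i} := by
    rw [Finset.add_sum_erase _ (fun i => #{w | C w = i}) (Finset.mem_univ _), ← Finset.card_univ]
    exact Finset.card_eq_sum_card_fiberwise fun w _ => Finset.mem_univ (C w)
  have : 0 < n := (C v).pos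
  omega

end SimpleGraph

section Upsilon

variable {V W : Type*} [Fintype V] [Fintype W] {k : ℕ}

def UpsilonBound (k : ℕ) (H : SimpleGraph V) : Prop :=
  (H.maxDegree + 1 : ℕ∞) ≤ H.chromaticNumber + k

lemma upsilonBound_iff {H : SimpleGraph V} :
    UpsilonBound k H ↔ H.maxDegree + 1 ≤ H.chromaticNumber.toNat + k := by
  rw [UpsilonBound, ← coe_toNat_chromaticNumber_s8]
  norm_cast

lemma upsilonBound_congr {H : SimpleGraph V} {H' : SimpleGraph W} (f : H ≃g H') :
    UpsilonBound k H ↔ UpsilonBound k H' := by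
  rw [UpsilonBound, UpsilonBound, f.maxDegree_eq, chromaticNumber_congr f]

lemma upsilonBound_induce_univ_iff {G : SimpleGraph V} :
    UpsilonBound k (G.induce ((Finset.univ : Finset V) : Set V)) ↔ UpsilonBound k G := by
  rw [← upsilonBound_congr (k := k) (induceUnivIso G)]
  convert Iff.rfl using 3 <;> simp

lemma UpsilonBound.degree_add_one_le {H : SimpleGraph V} (h : UpsilonBound k H) (v : V)
    [Fintype (H.neighborSet v)] : H.degree v + 1 ≤ H.chromaticNumber.toNat + k := by
  have hdeg : H.degree v ≤ H.maxDegree := by convert H.degree_le_maxDegree v using 2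
  exact (Nat.add_le_add_right hdeg 1).trans (upsilonBound_iff.mp h)

lemma UpsilonMem.upsilonBound [Nonempty V] {G : SimpleGraph V} (h : UpsilonMem k G) :
    UpsilonBound k G :=
  upsilonBound_induce_univ_iff.mp (h _ Finset.univ_nonempty)

lemma UpsilonMem.of_iso {G : SimpleGraph V} {G' : SimpleGraph W} (f : G ≃g G')
    (h : UpsilonMem k G) : UpsilonMem k G' := fun s hs =>
  (upsilonBound_congr (f.induceFinsetMap s)).mp (h _ hs.map)

namespace MinForbUpsilon

lemma of_iso {G : SimpleGraph V} {G' : SimpleGraph W} (f : G ≃g G')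
    (hG : MinForbUpsilon k G) : MinForbUpsilon k G' := by
  refine ⟨fun h => hG.1 (h.of_iso f.symm), fun s hs => ?_⟩
  have hmap : s.map f.symm.toEquiv.toEmbedding ≠ Finset.univ := fun hmap =>
    hs (Finset.map_injective _ (hmap.trans (Finset.map_univ_equiv _).symm))
  exact (hG.2 _ hmap).of_iso (f.induceFinsetMap s)

variable {G : SimpleGraph V} (hG : MinForbUpsilon k G)
include hG

lemma nonempty_s8 : Nonempty V := by
  by_contra hV
  rw [not_nonempty_iff] at hV
  exact hG.1 fun _ ⟨v, _⟩ => isEmptyElim v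

lemma upsilonBound_induce {s : Finset V} (hs : s ≠ Finset.univ) (hne : s.Nonempty) :
    UpsilonBound k (G.induce s) :=
  have := hne.coe_sort
  (hG.2 s hs).upsilonBound

lemma not_upsilonBound : ¬ UpsilonBound k G := fun hle => hG.1 fun s hne => by
  by_cases hs : s = Finset.univ
  · subst hs
    exact upsilonBound_induce_univ_iff.mpr hle
  · exact hG.upsilonBound_induce hs hne

lemma toNat_chromaticNumber_add_lt : G.chromaticNumber.toNat + k < G.maxDegree + 1 := by
  simpa [upsilonBound_iff] using hG.not_upsilonBound

lemma card_erase_add_one_le {u v : V} (huv : u ≠ v) :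
    #((G.neighborFinset v).erase u) + 1 ≤ (G.induce {u}ᶜ).chromaticNumber.toNat + k := by
  have hv : v ∈ (({u}ᶜ : Finset V) : Set V) := by simpa using huv.symm
  have hbound := (hG.upsilonBound_induce (s := {u}ᶜ) (by simp [Finset.compl_eq_univ_iff])
    ⟨v, hv⟩).degree_add_one_le ⟨v, hv⟩
  rw [degree_induce_coe_finset, ← Finset.sdiff_eq_inter_compl, Finset.sdiff_singleton_eq_erase]
    at hbound
  have hχ : (G.induce (({u}ᶜ : Finset V) : Set V)).chromaticNumber =
      (G.induce {u}ᶜ).chromaticNumber := by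
    rw [Finset.coe_compl, Finset.coe_singleton]
  rwa [hχ] at hbound

lemma isUniversal_of_maxDegree_eq {v : V} (hv : G.maxDegree = G.degree v) : G.IsUniversal v := by
  intro w hvw
  by_contra hadj
  have hbound := hG.card_erase_add_one_le hvw.symm
  rw [Finset.erase_eq_of_notMem (by simpa using hadj), card_neighborFinset_eq_degree, ← hv]
    at hbound
  have := toNat_chromaticNumber_induce_le G {w}ᶜ
  have := hG.toNat_chromaticNumber_add_lt
  omega

lemma maxDegree_le_toNat_chromaticNumber_induce {u v : V} (hv : G.maxDegree = G.degree v)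
    (huv : u ≠ v) : G.maxDegree ≤ (G.induce {u}ᶜ).chromaticNumber.toNat + k := by
  have hbound := hG.card_erase_add_one_le huv
  have herase := Finset.pred_card_le_card_erase (s := G.neighborFinset v) (a := u)
  rw [card_neighborFinset_eq_degree, ← hv] at herase
  omega

lemma chromaticNumber_le_induce {u v : V} (hv : G.maxDegree = G.degree v) (huv : u ≠ v) :
    G.chromaticNumber ≤ (G.induce {u}ᶜ).chromaticNumber := by
  rw [← coe_toNat_chromaticNumber_s8 G, ← coe_toNat_chromaticNumber_s8 (G.induce {u}ᶜ),
    ENat.natCast_le_natCast]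
  have := hG.maxDegree_le_toNat_chromaticNumber_induce hv huv
  have := hG.toNat_chromaticNumber_add_lt
  omega

theorem card_le : Fintype.card V ≤ 2 * k + 3 := by
  have := hG.nonempty_s8
  obtain ⟨v, hv⟩ := G.exists_maximal_degree_vertex
  have hdeg : G.degree v = Fintype.card V - 1 :=
    (G.degree_eq_card_sub_one v).mpr (hG.isUniversal_of_maxDegree_eq hv)
  have hcount := two_mul_toNat_chromaticNumber_le_card_add_one v fun u huv =>
    hG.chromaticNumber_le_induce hv huv
  have hlt := hG.toNat_chromaticNumber_add_lt
  have hpos := Fintype.card_pos (α := V)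
  rcases le_or_gt (Fintype.card V) 1 with hone | hone
  · omega
  obtain ⟨u, huv⟩ := Fintype.exists_ne_of_one_lt_card hone v
  have := hG.maxDegree_le_toNat_chromaticNumber_induce hv huv
  have := toNat_chromaticNumber_induce_le G {u}ᶜ
  omega

end MinForbUpsilon

end Upsilon

theorem minForbUpsilon_finite (k : ℕ) :
    {p : Σ n : Fin (2 * k + 4), SimpleGraph (Fin n) | MinForbUpsilon k p.2}.Finite ∧
      ∀ (V : Type) [Fintype V] (G : SimpleGraph V), MinForbUpsilon k G →
        ∃ p : Σ n : Fin (2 * k + 4), SimpleGraph (Fin n),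
          MinForbUpsilon k p.2 ∧ Nonempty (G ≃g p.2) := by
  refine ⟨Set.toFinite _, fun V _ G hG => ?_⟩
  let e := Iso.map (Fintype.equivFin V) G
  exact ⟨⟨⟨Fintype.card V, by have := hG.card_le; omega⟩, _⟩, hG.of_iso e, ⟨e⟩⟩
end

section
/- Let G be a perfect graph. The intersection of all maximum cliques of G is empty if and only if in every optimal proper coloring of G, every color class consists of at least two vertices. -/
open SimpleGraph

attribute [local instance] Classical.propDecidable

set_option linter.unnecessarySeqFocus false

/-! If `v` lies in every maximum clique, then `ω(G - v) < ω(G)`, so an `ω(G - v)`-colouring of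
`G - v`, which exists by perfection, extends to an optimal colouring of `G` in which `v` alone gets
a new colour. Conversely, if `{v}` is a colour class of an optimal colouring, then every maximum
clique has `ω(G) = χ(G)` vertices, so it meets every colour class and hence contains `v`. -/

section

variable {V : Type*} {G : SimpleGraph V}

theorem IsPerfect.colorable_induce [Fintype V] (h : IsPerfect G) (s : Set V) :
    (G.induce s).Colorable (G.induce s).cliqueNum := by
  have hs := (h s.toFinite.toFinset).ge
  rw [Set.Finite.coe_toFinset] at hs
  exact chromaticNumber_le_iff_colorable.mp hs

theorem IsPerfect.cliqueNum_eq_chromaticNumber [Fintype V] (h : IsPerfect G) :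
    (G.cliqueNum : ℕ∞) = G.chromaticNumber :=
  le_antisymm G.cliqueNum_le_chromaticNumber
    ((h.colorable_induce Set.univ).of_hom G.induceUnivIso.symm.toEmbedding.toHom
      |>.mono (G.cliqueNum_induce_le Set.univ) |>.chromaticNumber_le)

theorem SimpleGraph.cliqueNum_induce_compl_singleton_lt [Finite V] {v : V}
    (hv : ∀ t : Finset V, G.IsNClique G.cliqueNum t → v ∈ t) :
    (G.induce {v}ᶜ).cliqueNum < G.cliqueNum := by
  refine (G.cliqueNum_induce_le _).lt_of_ne fun heq => ?_
  obtain ⟨t, ht⟩ := (G.induce {v}ᶜ).exists_isNClique_cliqueNum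
  rw [isNClique_induce_iff, heq] at ht
  obtain ⟨⟨u, hu⟩, -, huv⟩ := Finset.mem_map.mp (hv _ ht)
  exact hu huv

def SimpleGraph.Coloring.extendComplSingleton [DecidableEq V] {v : V} {k : ℕ}
    (C : (G.induce {v}ᶜ).Coloring (Fin k)) : G.Coloring (Fin (k + 1)) :=
  Coloring.mk (fun u => if hu : u = v then Fin.last k else (C ⟨u, hu⟩).castSucc) <| by
    intro a b hab
    by_cases ha : a = v <;> by_cases hb : b = v <;> simp only [ha, hb, dite_true, dite_false]
    · exact absurd (ha ▸ hb ▸ hab) G.irrefl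
    · exact (Fin.castSucc_lt_last _).ne'
    · exact (Fin.castSucc_lt_last _).ne
    · exact fun e => C.valid (show (G.induce {v}ᶜ).Adj ⟨a, ha⟩ ⟨b, hb⟩ from hab)
        (Fin.castSucc_injective _ e)

theorem SimpleGraph.Coloring.extendComplSingleton_eq_last_iff [DecidableEq V] {v : V} {k : ℕ}
    (C : (G.induce {v}ᶜ).Coloring (Fin k)) (u : V) :
    C.extendComplSingleton u = Fin.last k ↔ u = v := by
  by_cases hu : u = v
  · simp [Coloring.extendComplSingleton, Coloring.mk, hu]
  · simp [Coloring.extendComplSingleton, Coloring.mk, hu, (Fin.castSucc_lt_last _).ne]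

end

theorem perfect_maxCliques_inter_empty_iff {V : Type*} [Fintype V]
    (G : SimpleGraph V) (h : IsPerfect G) :
    (¬ ∃ v : V, ∀ t : Finset V, G.IsNClique G.cliqueNum t → v ∈ t) ↔
      AllColorClassesBig G := by
  constructor
  · rintro hne n C hn c ⟨v, hv⟩
    by_contra! hsmall
    refine hne ⟨v, fun t ht => ?_⟩
    have hωn : G.cliqueNum = n := by exact_mod_cast h.cliqueNum_eq_chromaticNumber.trans hn.symm
    obtain ⟨u, hut, huc⟩ := C.surjOn_of_card_le_isClique ht.isClique
      (by rw [ht.card_eq, hωn, Fintype.card_fin]) (Set.mem_univ c)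
    have huv : u = v := congrArg Subtype.val
      (Fintype.card_le_one_iff.mp (by omega) (⟨u, huc⟩ : {x // C x = c}) ⟨v, hv⟩)
    exact huv ▸ hut
  · rintro hbig ⟨v, hv⟩
    set k := (G.induce {v}ᶜ).cliqueNum
    obtain ⟨C₀⟩ := h.colorable_induce {v}ᶜ
    let C := C₀.extendComplSingleton
    have hC := C₀.extendComplSingleton_eq_last_iff
    have hχ : ((k + 1 : ℕ) : ℕ∞) = G.chromaticNumber :=
      le_antisymm (h.cliqueNum_eq_chromaticNumber ▸
          Nat.cast_le.mpr (cliqueNum_induce_compl_singleton_lt hv))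
        (by simpa using C.colorable.chromaticNumber_le)
    have hclass := hbig (k + 1) C hχ (Fin.last k) ⟨v, (hC v).mpr rfl⟩
    rw [Fintype.card_congr (Equiv.subtypeEquivRight hC), Fintype.card_subtype_eq] at hclass
    omega
end

section
/- The minimal forbidden induced subgraphs of Υ₁ are exactly the claw K_{1,3}, the gem, the wheel W₄, and the butterfly; i.e., a graph G satisfies Δ(H) ≤ χ(H) for every induced subgraph H if and only if G contains none of these four graphs as an induced subgraph. -/
open SimpleGraph

attribute [local instance] Classical.propDecidable

set_option linter.unnecessarySeqFocus false

/-!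
Each of the four graphs has a vertex whose degree exceeds its chromatic number, and `Υ₁` is
closed under induced subgraphs, so a graph in `Υ₁` contains none of them.

Conversely, let `G` contain none of them and let `v` be a vertex of maximum degree. Inside `N(v)`
the non-edges form a triangle-free graph (no claw) in which any two edges meet: for two disjoint
non-edges `ab`, `cd`, the edges between `{a, b}` and `{c, d}` form, together with `v`, a claw, a
butterfly, a gem or a `W₄`. Such a graph is a star, so deleting one vertex from `N(v)` leaves a
clique, and adding `v` back gives a clique with `Δ(G)` vertices; hence `Δ(G) ≤ χ(G)`.

The four graphs are the minimal ones because the claw has four vertices, while the other three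
have five vertices and no three pairwise non-adjacent ones, hence no induced claw.
-/

instance (n : ℕ) : DecidableRel (pathGraph n).Adj :=
  fun _ _ => decidable_of_iff' _ pathGraph_adj

instance {V : Type*} {G : SimpleGraph V} [DecidableRel G.Adj] : DecidableRel (cone G).Adj
  | some a, some b => inferInstanceAs (Decidable (G.Adj a b))
  | some _, none => .isTrue trivial
  | none, some _ => .isTrue trivial
  | none, none => .isFalse id

instance : DecidableRel claw.Adj := fun a b =>
  inferInstanceAs (Decidable (a.isLeft ∧ b.isRight ∨ a.isRight ∧ b.isLeft))

instance : DecidableRel gem.Adj := inferInstanceAs (DecidableRel (cone (pathGraph 4)).Adj)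

instance : DecidableRel wheel4.Adj := inferInstanceAs (DecidableRel (cone (cycleGraph 4)).Adj)

instance : DecidableRel butterfly.Adj := inferInstanceAs (DecidableRel (fromRel _).Adj)

section General

variable {V W : Type*} {G : SimpleGraph V} {H : SimpleGraph W}

lemma isIndContained_of_adj_iff (f : W → V) (hf : Function.Injective f)
    (hadj : ∀ a b, G.Adj (f a) (f b) ↔ H.Adj a b) : H ⊴ G :=
  ⟨⟨⟨f, hf⟩, hadj _ _⟩⟩

lemma cone_isIndContained_of_adj_iff {v : V} (f : W → V) (hf : Function.Injective f)
    (hv : ∀ w, G.Adj v (f w)) (hadj : ∀ a b, G.Adj (f a) (f b) ↔ H.Adj a b) : cone H ⊴ G := by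
  refine isIndContained_of_adj_iff (fun o => o.elim v f) ?_ ?_
  · rintro (_ | a) (_ | b) h
    · rfl
    · exact absurd h (hv b).ne
    · exact absurd h.symm (hv a).ne
    · exact congrArg some (hf h)
  · rintro (_ | a) (_ | b)
    · exact iff_of_false (G.loopless.irrefl v) id
    · exact iff_of_true (hv b) trivial
    · exact iff_of_true (hv a).symm trivial
    · exact hadj a b

/-- An intersecting family of edges without a triangle is a star. -/
lemma exists_forall_adj_eq_or_eq [Nonempty V] {S : Set V}
    (htri : ∀ x ∈ S, ∀ y ∈ S, ∀ z ∈ S, G.Adj x y → G.Adj y z → ¬ G.Adj x z)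
    (hmeet : ∀ a ∈ S, ∀ b ∈ S, ∀ c ∈ S, ∀ d ∈ S, G.Adj a b → G.Adj c d →
      a = c ∨ a = d ∨ b = c ∨ b = d) :
    ∃ u, ∀ x ∈ S, ∀ y ∈ S, G.Adj x y → x = u ∨ y = u := by
  by_contra! hstar
  obtain ⟨a, ha, b, hb, hab, -⟩ := hstar (Classical.arbitrary V)
  obtain ⟨c, hc, d, hd, hcd, hca, hda⟩ := hstar a
  -- `cd` meets `ab` away from `a`, so `b` has a neighbour `e ≠ a`
  obtain ⟨e, he, hbe, hea⟩ : ∃ e ∈ S, G.Adj b e ∧ e ≠ a := by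
    rcases hmeet a ha b hb c hc d hd hab hcd with h | h | rfl | rfl
    exacts [absurd h.symm hca, absurd h.symm hda, ⟨d, hd, hcd, hda⟩, ⟨c, hc, hcd.symm, hca⟩]
  obtain ⟨x, hx, y, hy, hxy, hxb, hyb⟩ := hstar b
  -- the edge `xy` avoids `b` but meets both `ab` and `be`, so it is the third side `ae`
  have hxa : x = a ∨ y = a := by have := hmeet a ha b hb x hx y hy hab hxy; grind
  have hxe : x = e ∨ y = e := by have := hmeet b hb e he x hx y hy hbe hxy; grind
  rcases hxa with rfl | rfl <;> rcases hxe with rfl | rfl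
  exacts [hea rfl, htri x ha b hb y he hab hbe hxy, htri y ha b hb x he hab hbe hxy.symm, hea rfl]

lemma degree_le_chromaticNumber_of_isClique [Fintype V] [DecidableRel G.Adj] {v u : V}
    (h : G.IsClique (G.neighborSet v \ {u})) : (G.degree v : ℕ∞) ≤ G.chromaticNumber := by
  classical
  set t := insert v ((G.neighborFinset v).erase u)
  have ht : G.IsClique (t : Set V) := by
    rw [Finset.coe_insert, Finset.coe_erase, coe_neighborFinset]
    exact h.insert fun b hb _ => hb.1
  have hcard : G.degree v ≤ t.card := by
    rw [Finset.card_insert_of_notMem fun hv => G.notMem_neighborFinset_self v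
      (Finset.mem_of_mem_erase hv), ← card_neighborFinset_eq_degree]
    have := Finset.pred_card_le_card_erase (s := G.neighborFinset v) (a := u)
    omega
  exact (Nat.cast_le.2 hcard).trans ht.card_le_chromaticNumber

end General

section Upsilon

variable {V W : Type*} [Fintype V] [Fintype W] {G : SimpleGraph V} {H : SimpleGraph W} {k : ℕ}

noncomputable def SimpleGraph.Embedding.isoInduceRangeToFinset (f : H ↪g G) :
    H ≃g G.induce ((Set.range f).toFinset : Set V) :=
  f.isoInduceRange.trans (Iso.refl.induce (by rw [Set.coe_toFinset]; exact Set.bijOn_id _))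

lemma UpsilonMem.maxDegree_add_one_le_s15 [Nonempty W] [DecidableRel H.Adj] (hG : UpsilonMem k G)
    (hH : H ⊴ G) : (H.maxDegree + 1 : ℕ∞) ≤ H.chromaticNumber + k := by
  obtain ⟨f⟩ := hH
  rw [f.isoInduceRangeToFinset.maxDegree_eq, chromaticNumber_congr f.isoInduceRangeToFinset]
  exact hG _ (by simp)

lemma UpsilonMem.of_isIndContained (hG : UpsilonMem k G) (hH : H ⊴ G) : UpsilonMem k H :=
  fun _ hs =>
    have := hs.coe_sort
    hG.maxDegree_add_one_le_s15 ((Embedding.induce _).isIndContained.trans hH)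

lemma not_upsilonMem_of_colorable [DecidableRel G.Adj] {c : ℕ} (hc : G.Colorable c) {v : V}
    (hv : c + k ≤ G.degree v) : ¬ UpsilonMem k G := by
  intro hG
  have := Nonempty.intro v
  have h : ((G.maxDegree + 1 : ℕ) : ℕ∞) ≤ ((c + k : ℕ) : ℕ∞) := by
    push_cast
    exact (hG.maxDegree_add_one_le_s15 .rfl).trans (add_le_add_left hc.chromaticNumber_le _)
  have := G.degree_le_maxDegree v
  have := Nat.cast_le.1 h
  omega

lemma MinForbUpsilon.nonempty_iso (hG : MinForbUpsilon k G) (hH : ¬ UpsilonMem k H)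
    (hHG : H ⊴ G) : Nonempty (G ≃g H) := by
  obtain ⟨f⟩ := hHG
  refine ⟨(RelIso.ofSurjective f fun x => ?_).symm⟩
  by_contra! hx
  have hs : (Set.range f).toFinset ≠ Finset.univ := fun h => by
    obtain ⟨a, ha⟩ := Set.mem_toFinset.1 (h ▸ Finset.mem_univ x)
    exact hx a ha
  exact hH ((hG.2 _ hs).of_isIndContained f.isoInduceRangeToFinset.isIndContained)

end Upsilon

lemma not_upsilonMem_one_claw : ¬ UpsilonMem 1 claw :=
  not_upsilonMem_of_colorable (c := 2) (v := .inl 0)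
    ⟨Coloring.mk (Sum.elim (fun _ => 0) fun _ => 1) (by decide)⟩ (by decide)

lemma not_upsilonMem_one_gem : ¬ UpsilonMem 1 gem :=
  not_upsilonMem_of_colorable (c := 3) (v := none)
    ⟨Coloring.mk (fun o => o.elim 2 fun i => ⟨i % 2, by omega⟩) (by decide)⟩ (by decide)

lemma not_upsilonMem_one_wheel4 : ¬ UpsilonMem 1 wheel4 :=
  not_upsilonMem_of_colorable (c := 3) (v := none)
    ⟨Coloring.mk (fun o => o.elim 2 fun i => ⟨i % 2, by omega⟩) (by decide)⟩ (by decide)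

lemma not_upsilonMem_one_butterfly : ¬ UpsilonMem 1 butterfly :=
  not_upsilonMem_of_colorable (c := 3) (v := 0) ⟨Coloring.mk ![0, 1, 2, 1, 2] (by decide)⟩
    (by decide)

lemma not_claw_isIndContained {V : Type*} {G : SimpleGraph V}
    (h : ∀ a b c : V, a ≠ b → a ≠ c → b ≠ c → G.Adj a b ∨ G.Adj a c ∨ G.Adj b c) :
    ¬ claw ⊴ G := by
  rintro ⟨f⟩
  have hne : ∀ i j : Fin 3, i ≠ j → f (.inr i) ≠ f (.inr j) :=
    fun i j hij => f.injective.ne (Sum.inr_injective.ne hij)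
  have hleaves : ∀ i j : Fin 3, ¬ G.Adj (f (.inr i)) (f (.inr j)) :=
    fun i j hadj => by simpa [claw] using f.map_adj_iff.1 hadj
  rcases h _ _ _ (hne 0 1 (by decide)) (hne 0 2 (by decide)) (hne 1 2 (by decide)) with h | h | h
    <;> exact hleaves _ _ h

lemma not_claw_isIndContained_gem : ¬ claw ⊴ gem := not_claw_isIndContained (by decide)

lemma not_claw_isIndContained_wheel4 : ¬ claw ⊴ wheel4 := not_claw_isIndContained (by decide)

lemma not_claw_isIndContained_butterfly : ¬ claw ⊴ butterfly :=
  not_claw_isIndContained (by decide)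

section Configurations

variable {V : Type*} {G : SimpleGraph V} {v : V}

lemma claw_isIndContained_of_adj {x y z : V} (hx : G.Adj v x) (hy : G.Adj v y)
    (hz : G.Adj v z) (hxy : Gᶜ.Adj x y) (hxz : Gᶜ.Adj x z) (hyz : Gᶜ.Adj y z) : claw ⊴ G := by
  refine isIndContained_of_adj_iff (Sum.elim (fun _ => v) ![x, y, z]) ?_ ?_
  · rintro (a | a) (b | b) h <;> fin_cases a <;> fin_cases b <;> simp_all
  · rintro (a | a) (b | b) <;> fin_cases a <;> fin_cases b <;> simp_all [G.adj_comm] <;> decide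

lemma gem_isIndContained_of_adj {p q r s : V} (hp : G.Adj v p) (hq : G.Adj v q)
    (hr : G.Adj v r) (hs : G.Adj v s) (hpq : G.Adj p q) (hqr : G.Adj q r) (hrs : G.Adj r s)
    (hpr : Gᶜ.Adj p r) (hps : Gᶜ.Adj p s) (hqs : Gᶜ.Adj q s) : gem ⊴ G := by
  refine cone_isIndContained_of_adj_iff (v := v) ![p, q, r, s] ?_ ?_ ?_
  · intro a b h
    fin_cases a <;> fin_cases b <;> simp_all
  · intro w
    fin_cases w <;> assumption
  · intro a b
    fin_cases a <;> fin_cases b <;> simp_all [G.adj_comm] <;> decide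

lemma wheel4_isIndContained_of_adj {p q r s : V} (hp : G.Adj v p) (hq : G.Adj v q)
    (hr : G.Adj v r) (hs : G.Adj v s) (hpq : G.Adj p q) (hqr : G.Adj q r) (hrs : G.Adj r s)
    (hsp : G.Adj s p) (hpr : Gᶜ.Adj p r) (hqs : Gᶜ.Adj q s) : wheel4 ⊴ G := by
  refine cone_isIndContained_of_adj_iff (v := v) ![p, q, r, s] ?_ ?_ ?_
  · intro a b h
    fin_cases a <;> fin_cases b <;> simp_all
  · intro w
    fin_cases w <;> assumption
  · intro a b
    fin_cases a <;> fin_cases b <;> simp_all [G.adj_comm] <;> decide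

lemma butterfly_isIndContained_of_adj {p q r s : V} (hp : G.Adj v p) (hq : G.Adj v q)
    (hr : G.Adj v r) (hs : G.Adj v s) (hpq : G.Adj p q) (hrs : G.Adj r s)
    (hpr : Gᶜ.Adj p r) (hps : Gᶜ.Adj p s) (hqr : Gᶜ.Adj q r) (hqs : Gᶜ.Adj q s) :
    butterfly ⊴ G := by
  refine isIndContained_of_adj_iff ![v, p, q, r, s] ?_ ?_
  · intro a b h
    fin_cases a <;> fin_cases b <;> simp_all
  · intro a b
    fin_cases a <;> fin_cases b <;> simp_all [G.adj_comm] <;> decide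

end Configurations

def ClawGemW4ButterflyFree {V : Type*} (G : SimpleGraph V) : Prop :=
  ¬ claw ⊴ G ∧ ¬ gem ⊴ G ∧ ¬ wheel4 ⊴ G ∧ ¬ butterfly ⊴ G

namespace ClawGemW4ButterflyFree

variable {V W : Type*} {G : SimpleGraph V} {H : SimpleGraph W}

lemma of_isIndContained (hG : ClawGemW4ButterflyFree G) (hH : H ⊴ G) :
    ClawGemW4ButterflyFree H :=
  ⟨fun h => hG.1 (h.trans hH), fun h => hG.2.1 (h.trans hH), fun h => hG.2.2.1 (h.trans hH),
    fun h => hG.2.2.2 (h.trans hH)⟩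

lemma eq_or_eq_of_compl_adj (hG : ClawGemW4ButterflyFree G) {v a b c d : V}
    (ha : G.Adj v a) (hb : G.Adj v b) (hc : G.Adj v c) (hd : G.Adj v d)
    (hab : Gᶜ.Adj a b) (hcd : Gᶜ.Adj c d) : a = c ∨ a = d ∨ b = c ∨ b = d := by
  obtain ⟨hclaw, hgem, hwheel, hbut⟩ := hG
  by_contra! hne
  obtain ⟨hac, had, hbc, hbd⟩ := hne
  have nc : ∀ {x y}, x ≠ y → ¬ G.Adj x y → Gᶜ.Adj x y := fun h h' => (compl_adj G _ _).2 ⟨h, h'⟩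
  -- without a claw, every vertex of each pair has a neighbour in the other pair
  have ha' : G.Adj a c ∨ G.Adj a d := by
    by_contra! h
    exact hclaw (claw_isIndContained_of_adj ha hc hd (nc hac h.1) (nc had h.2) hcd)
  have hb' : G.Adj b c ∨ G.Adj b d := by
    by_contra! h
    exact hclaw (claw_isIndContained_of_adj hb hc hd (nc hbc h.1) (nc hbd h.2) hcd)
  have hc' : G.Adj a c ∨ G.Adj b c := by
    by_contra! h
    exact hclaw (claw_isIndContained_of_adj hc ha hb (nc hac h.1).symm (nc hbc h.2).symm hab)
  have hd' : G.Adj a d ∨ G.Adj b d := by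
    by_contra! h
    exact hclaw (claw_isIndContained_of_adj hd ha hb (nc had h.1).symm (nc hbd h.2).symm hab)
  by_cases eac : G.Adj a c
  · by_cases ebd : G.Adj b d
    · by_cases ead : G.Adj a d <;> by_cases ebc : G.Adj b c
      · exact hwheel (wheel4_isIndContained_of_adj ha hc hb hd eac ebc.symm ebd ead.symm hab hcd)
      · exact hgem (gem_isIndContained_of_adj hc ha hd hb eac.symm ead ebd.symm hcd
          (nc hbc ebc).symm hab)
      · exact hgem (gem_isIndContained_of_adj hd hb hc ha ebd.symm ebc eac.symm hcd.symm
          (nc had ead).symm hab.symm)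
      · exact hbut (butterfly_isIndContained_of_adj ha hc hb hd eac ebd hab (nc had ead)
          (nc hbc ebc).symm hcd)
    · have ebc := hb'.resolve_right ebd
      have ead := hd'.resolve_right ebd
      exact hgem (gem_isIndContained_of_adj hd ha hc hb ead.symm eac ebc.symm hcd.symm
        (nc hbd ebd).symm hab)
  · have ead := ha'.resolve_left eac
    have ebc := hc'.resolve_left eac
    by_cases ebd : G.Adj b d
    · exact hgem (gem_isIndContained_of_adj ha hd hb hc ead ebd.symm ebc hab (nc hac eac)
        hcd.symm)
    · exact hbut (butterfly_isIndContained_of_adj ha hd hb hc ead ebc hab (nc hac eac)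
        (nc hbd ebd).symm hcd.symm)

lemma maxDegree_le_chromaticNumber [Fintype V] [DecidableRel G.Adj]
    (hG : ClawGemW4ButterflyFree G) : (G.maxDegree : ℕ∞) ≤ G.chromaticNumber := by
  cases isEmpty_or_nonempty V
  · simp [maxDegree_of_subsingleton]
  obtain ⟨v, hv⟩ := G.exists_maximal_degree_vertex
  obtain ⟨u, hu⟩ := exists_forall_adj_eq_or_eq (G := Gᶜ) (S := G.neighborSet v)
    (fun x hx y hy z hz hxy hyz hxz =>
      hG.1 (claw_isIndContained_of_adj hx hy hz hxy hxz hyz))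
    (fun a ha b hb c hc d hd hab hcd => hG.eq_or_eq_of_compl_adj ha hb hc hd hab hcd)
  rw [hv]
  refine degree_le_chromaticNumber_of_isClique (u := u) fun x hx y hy hxy => ?_
  by_contra h
  rcases hu x hx.1 y hy.1 ((compl_adj G x y).2 ⟨hxy, h⟩) with rfl | rfl
  exacts [hx.2 rfl, hy.2 rfl]

end ClawGemW4ButterflyFree

section Characterization

variable {V : Type*} [Fintype V] {G : SimpleGraph V}

lemma upsilonMem_one_iff : UpsilonMem 1 G ↔ ClawGemW4ButterflyFree G := by
  refine ⟨fun hG => ⟨fun h => not_upsilonMem_one_claw (hG.of_isIndContained h),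
    fun h => not_upsilonMem_one_gem (hG.of_isIndContained h),
    fun h => not_upsilonMem_one_wheel4 (hG.of_isIndContained h),
    fun h => not_upsilonMem_one_butterfly (hG.of_isIndContained h)⟩, fun hG s _ => ?_⟩
  have := (hG.of_isIndContained (Embedding.induce (s : Set V)).isIndContained
    ).maxDegree_le_chromaticNumber
  rw [Nat.cast_one]
  exact add_le_add_left this 1

lemma minForbUpsilon_one_of_iso {W : Type*} [Fintype W] {Y : SimpleGraph W}
    (hY : ¬ UpsilonMem 1 Y) (hcard : Fintype.card W ≤ 5) (hclaw : claw ⊴ Y → Fintype.card W ≤ 4)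
    (e : G ≃g Y) : MinForbUpsilon 1 G := by
  refine ⟨fun hG => hY (hG.of_isIndContained e.symm.isIndContained), fun s hs => ?_⟩
  have hsW : s.card < Fintype.card W :=
    Fintype.card_congr e.toEquiv ▸ (Finset.card_lt_iff_ne_univ s).2 hs
  have card_le {U : Type} [Fintype U] {X : SimpleGraph U} (hX : X ⊴ G.induce s) :
      Fintype.card U ≤ s.card := by
    obtain ⟨f⟩ := hX
    simpa using Fintype.card_le_of_embedding f.toEmbedding
  refine upsilonMem_one_iff.2 ⟨fun h => ?_, fun h => ?_, fun h => ?_, fun h => ?_⟩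
  · have := hclaw (h.trans ((Embedding.induce _).isIndContained.trans e.isIndContained))
    have := card_le h
    rw [Fintype.card_sum, Fintype.card_fin, Fintype.card_fin] at this
    omega
  all_goals
    have := card_le h
    simp only [Fintype.card_option, Fintype.card_fin] at this
    omega

lemma minForbUpsilon_one_iff : MinForbUpsilon 1 G ↔
    Nonempty (G ≃g claw) ∨ Nonempty (G ≃g gem) ∨ Nonempty (G ≃g wheel4) ∨
      Nonempty (G ≃g butterfly) := by
  refine ⟨fun hG => ?_, ?_⟩
  · have : ¬ ClawGemW4ButterflyFree G := fun h => hG.1 (upsilonMem_one_iff.2 h)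
    simp only [ClawGemW4ButterflyFree, not_and_or, not_not] at this
    rcases this with h | h | h | h
    exacts [.inl (hG.nonempty_iso not_upsilonMem_one_claw h),
      .inr (.inl (hG.nonempty_iso not_upsilonMem_one_gem h)),
      .inr (.inr (.inl (hG.nonempty_iso not_upsilonMem_one_wheel4 h))),
      .inr (.inr (.inr (hG.nonempty_iso not_upsilonMem_one_butterfly h)))]
  · rintro (⟨⟨e⟩⟩ | ⟨⟨e⟩⟩ | ⟨⟨e⟩⟩ | ⟨⟨e⟩⟩)
    · exact minForbUpsilon_one_of_iso not_upsilonMem_one_claw (by simp) (fun _ => by simp) e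
    · exact minForbUpsilon_one_of_iso not_upsilonMem_one_gem (by simp)
        (absurd · not_claw_isIndContained_gem) e
    · exact minForbUpsilon_one_of_iso not_upsilonMem_one_wheel4 (by simp)
        (absurd · not_claw_isIndContained_wheel4) e
    · exact minForbUpsilon_one_of_iso not_upsilonMem_one_butterfly (by simp)
        (absurd · not_claw_isIndContained_butterfly) e

end Characterization

theorem upsilon_one_charac :
    (∀ (V : Type) [Fintype V] (G : SimpleGraph V),
      UpsilonMem 1 G ↔
        (¬ Nonempty (claw ↪g G) ∧ ¬ Nonempty (gem ↪g G) ∧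
          ¬ Nonempty (wheel4 ↪g G) ∧ ¬ Nonempty (butterfly ↪g G))) ∧
      (∀ (V : Type) [Fintype V] (G : SimpleGraph V),
        MinForbUpsilon 1 G ↔
          (Nonempty (G ≃g claw) ∨ Nonempty (G ≃g gem) ∨
            Nonempty (G ≃g wheel4) ∨ Nonempty (G ≃g butterfly))) :=
  ⟨fun _ _ _ => upsilonMem_one_iff, fun _ _ _ => minForbUpsilon_one_iff⟩
end
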